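/- Every exactly 2-edge-connected multigraph G can be obtained by a Robbins synthesis: there exists a sequence of multigraphs G_0, G_1, ..., G_l with G_0 a simple cycle, G_l = G, and each G_{i+1} obtained from G_i by a cycle addition (adding a path of new vertices whose two endpoints are attached to a single existing vertex of G_i, forming a new cycle meeting G_i in exactly one vertex). -/

import Mathlib

/-! Basic theory of loopless undirected multigraphs. -/

/-- A loopless undirected multigraph on the vertex type `V`: a type of edges
together with a map assigning to each edge its unordered pair of (distinct)
endpoints.  All multigraphs are assumed to have finitely many edges. -/
structure Multigraph (V : Type) where
  Edge : Type
  ends : Edge → Sym2 V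
  loopless : ∀ e, ¬ (ends e).IsDiag
  edge_finite : Finite Edge

namespace Multigraph

open scoped Classical

variable {V : Type}

instance (G : Multigraph V) : Finite G.Edge := G.edge_finite

lemma exists_pair_eq {α : Type} (z : Sym2 α) : ∃ x y, z = s(x, y) := by
  induction z using Sym2.ind with
  | _ x y => exact ⟨x, y, rfl⟩

lemma map_not_isDiag {α β : Type} (f : α → β) (z : Sym2 α)
    (hf : ∀ x ∈ z, ∀ y ∈ z, f x = f y → x = y) (hz : ¬ z.IsDiag) :
    ¬ (z.map f).IsDiag := by
  obtain ⟨x, y, rfl⟩ := exists_pair_eq z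
  rw [Sym2.map_pair_eq, Sym2.mk_isDiag_iff]
  rw [Sym2.mk_isDiag_iff] at hz
  exact fun h => hz (hf x (by simp) y (by simp) h)

/-- Restrict an unordered pair, all of whose members satisfy `P`, to an
unordered pair of elements of the subtype `{x // P x}`. -/
noncomputable def sym2RestrictP {α : Type} (P : α → Prop) (z : Sym2 α) (h : ∀ x ∈ z, P x) :
    Sym2 {x : α // P x} :=
  z.map fun x =>
    if hx : P x then ⟨x, hx⟩
    else Classical.choice (by
      obtain ⟨a, b, rfl⟩ := exists_pair_eq z
      exact ⟨⟨a, h a (by simp)⟩⟩)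

lemma sym2RestrictP_not_isDiag {α : Type} (P : α → Prop) (z : Sym2 α) (h : ∀ x ∈ z, P x)
    (hz : ¬ z.IsDiag) : ¬ (sym2RestrictP P z h).IsDiag := by
  apply map_not_isDiag
  · intro a ha b hb hab
    rw [dif_pos (h a ha), dif_pos (h b hb)] at hab
    exact congrArg Subtype.val hab
  · exact hz

/-- Walks in a multigraph, recorded as alternating sequences of vertices and edges. -/
inductive Walk (G : Multigraph V) : V → V → Type
  | nil (v : V) : Walk G v v
  | cons {u v w : V} (e : G.Edge) (he : G.ends e = s(u, v)) (p : Walk G v w) : Walk G u w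

namespace Walk

variable {G : Multigraph V}

/-- The list of edges used by a walk. -/
def edges : ∀ {u v : V}, G.Walk u v → List G.Edge
  | _, _, nil _ => []
  | _, _, cons e _ p => e :: p.edges

/-- The list of vertices visited by a walk, in order. -/
def support : ∀ {u v : V}, G.Walk u v → List V
  | u, _, nil _ => [u]
  | u, _, cons _ _ p => u :: p.support

end Walk

/-- `G.HasEDP u v k` : there are (at least) `k` pairwise edge-disjoint paths
between `u` and `v` in `G` (formalized as `k` pairwise edge-disjoint trails,
which is equivalent). -/
def HasEDP (G : Multigraph V) (u v : V) (k : ℕ) : Prop :=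
  ∃ P : Fin k → G.Walk u v,
    (∀ i, (P i).edges.Nodup) ∧
    ∀ i j, i ≠ j → ∀ e, e ∈ (P i).edges → e ∉ (P j).edges

/-- `G` is `k`-edge-connected: between any two distinct vertices there are at
least `k` pairwise edge-disjoint paths. -/
def EdgeConnected (G : Multigraph V) (k : ℕ) : Prop :=
  Nontrivial V ∧ ∀ u v : V, u ≠ v → G.HasEDP u v k

/-- `G` is exactly `k`-edge-connected: between any two distinct vertices there
are exactly `k` pairwise edge-disjoint paths (at least `k`, and not `k + 1`). -/
def ExactlyEdgeConnected (G : Multigraph V) (k : ℕ) : Prop :=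
  Nontrivial V ∧ ∀ u v : V, u ≠ v → G.HasEDP u v k ∧ ¬ G.HasEDP u v (k + 1)

/-- The degree of a vertex: the number of edges incident to it. -/
noncomputable def degree (G : Multigraph V) (v : V) : ℕ :=
  {e : G.Edge | v ∈ G.ends e}.ncard

/-- Two vertices are adjacent if some edge joins them. -/
def Adj (G : Multigraph V) (u v : V) : Prop := ∃ e : G.Edge, G.ends e = s(u, v)

/-- `G` restricted to `S` is connected (witnessed by walks staying inside `S`). -/
def ConnectedOn (G : Multigraph V) (S : Set V) : Prop :=
  ∀ u ∈ S, ∀ v ∈ S, ∃ p : G.Walk u v, ∀ x ∈ p.support, x ∈ S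

/-- A multigraph is connected if it is nonempty and any two vertices are
joined by a walk. -/
def Connected (G : Multigraph V) : Prop :=
  Nonempty V ∧ ∀ u v : V, Nonempty (G.Walk u v)

/-- A multigraph is 2-vertex-connected (biconnected) if it is connected and
removing any single vertex leaves it connected. -/
def Biconnected (G : Multigraph V) : Prop :=
  G.Connected ∧ ∀ x : V, G.ConnectedOn {x}ᶜ

/-- A closed walk is a cycle if it repeats no edge, repeats no vertex except
the base point, and has length at least 2 (a double edge is a cycle of
length 2; loops are excluded since multigraphs are loopless). -/
def IsCycle {G : Multigraph V} {v : V} (p : G.Walk v v) : Prop :=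
  p.edges.Nodup ∧ p.support.tail.Nodup ∧ 2 ≤ p.edges.length

/-- A closed walk is chordless if no edge outside of it joins two of its
vertices (a parallel copy of one of its edges counts as a chord). -/
def IsChordless {G : Multigraph V} {v : V} (p : G.Walk v v) : Prop :=
  ∀ e : G.Edge, e ∉ p.edges → ∀ x y : V, G.ends e = s(x, y) →
    x ∈ p.support → y ∈ p.support → False

/-- `G.ReachAvoid S x y`: there is a walk from `x` to `y` avoiding the set `S`. -/
def ReachAvoid (G : Multigraph V) (S : Set V) (x y : V) : Prop :=
  ∃ p : G.Walk x y, ∀ z ∈ p.support, z ∉ S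

/-- The vertex sets of the connected components of `G ∖ S`.  For a cycle (or
any subgraph) `C`, the `C`-partition of the paper consists of `C` together
with these components; its size is the number of components. -/
def componentsAvoiding (G : Multigraph V) (S : Set V) : Set (Set V) :=
  {T | ∃ x, x ∉ S ∧ T = {y | G.ReachAvoid S x y}}

/-- Contract the (nonempty) vertex set `S` of `G` to a single new vertex
(`none`), deleting the edges inside `S`. -/
noncomputable def contractSet (G : Multigraph V) (S : Set V) :
    Multigraph (Option {x : V // x ∉ S}) where
  Edge := {e : G.Edge // ¬ ∀ x ∈ G.ends e, x ∈ S}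
  ends e := (G.ends e.1).map fun x => if h : x ∈ S then none else some ⟨x, h⟩
  loopless := by
    rintro ⟨e, he⟩ hd
    obtain ⟨x, y, hxy⟩ := exists_pair_eq (G.ends e)
    have hxyne : x ≠ y := by
      have h0 := G.loopless e
      rw [hxy, Sym2.mk_isDiag_iff] at h0
      exact h0
    have hor : x ∉ S ∨ y ∉ S := by
      by_contra hcon
      push_neg at hcon
      refine he fun z hz => ?_
      rw [hxy, Sym2.mem_iff] at hz
      rcases hz with rfl | rfl
      exacts [hcon.1, hcon.2]
    simp only [hxy, Sym2.map_pair_eq, Sym2.mk_isDiag_iff] at hd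
    rcases hor with hx | hy
    · rw [dif_neg hx] at hd
      by_cases hy : y ∈ S
      · rw [dif_pos hy] at hd; exact absurd hd (by simp)
      · rw [dif_neg hy] at hd
        exact hxyne (congrArg Subtype.val (Option.some_injective _ hd))
    · rw [dif_neg hy] at hd
      by_cases hx : x ∈ S
      · rw [dif_pos hx] at hd; exact absurd hd (by simp)
      · rw [dif_neg hx] at hd
        exact hxyne (congrArg Subtype.val (Option.some_injective _ hd))
  edge_finite := by
    have := G.edge_finite
    exact inferInstance

/-- The subgraph of `G` induced by the vertex set `S`. -/
noncomputable def induce (G : Multigraph V) (S : Set V) : Multigraph ↥S where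
  Edge := {e : G.Edge // ∀ x ∈ G.ends e, x ∈ S}
  ends e := sym2RestrictP (· ∈ S) (G.ends e.1) e.2
  loopless := fun e => sym2RestrictP_not_isDiag _ _ _ (G.loopless e.1)
  edge_finite := by
    have := G.edge_finite
    exact inferInstance

/-- Isomorphism of multigraphs. -/
structure Iso {V W : Type} (G : Multigraph V) (H : Multigraph W) where
  vmap : V ≃ W
  emap : G.Edge ≃ H.Edge
  ends_vmap : ∀ e : G.Edge, H.ends (emap e) = (G.ends e).map vmap

/-- `G` is quasi `k`-regular: at most one vertex has degree different from `k`. -/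
def QuasiRegular (G : Multigraph V) (k : ℕ) : Prop :=
  {v : V | G.degree v ≠ k}.Subsingleton

end Multigraph
namespace Multigraph

open scoped Classical

variable {V : Type}

/-- Block gluing: identify the vertex `u₁` of `G₁` with the vertex `u₂` of `G₂`
(the identified vertex is represented by `Sum.inl u₁`), keeping all edges. -/
noncomputable def blockGlue {V₁ V₂ : Type} (G₁ : Multigraph V₁) (G₂ : Multigraph V₂)
    (u₁ : V₁) (u₂ : V₂) : Multigraph (V₁ ⊕ {y : V₂ // y ≠ u₂}) where
  Edge := G₁.Edge ⊕ G₂.Edge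
  ends e :=
    match e with
    | .inl e => (G₁.ends e).map Sum.inl
    | .inr e => (G₂.ends e).map fun y => if h : y = u₂ then Sum.inl u₁ else Sum.inr ⟨y, h⟩
  loopless := by
    rintro (e | e) hd
    · exact map_not_isDiag _ _ (fun x _ y _ h => Sum.inl_injective h) (G₁.loopless e) hd
    · refine map_not_isDiag _ _ (fun x _ y _ h => ?_) (G₂.loopless e) hd
      by_cases hx : x = u₂ <;> by_cases hy : y = u₂
      · rw [hx, hy]
      · simp [hx, hy] at h
      · simp [hx, hy] at h
      · simp [hx, hy] at h
        exact h
  edge_finite := by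
    have := G₁.edge_finite; have := G₂.edge_finite
    exact inferInstance

/-- `k`-bridge addition: add a new vertex (`none`) joined to the existing
vertex `v` by `k` parallel edges. -/
def bridgeAdd (G : Multigraph V) (v : V) (k : ℕ) : Multigraph (Option V) where
  Edge := G.Edge ⊕ Fin k
  ends e :=
    match e with
    | .inl e => (G.ends e).map some
    | .inr _ => s(none, some v)
  loopless := by
    rintro (e | i) hd
    · exact map_not_isDiag _ _ (fun x _ y _ h => Option.some_injective _ h) (G.loopless e) hd
    · rw [Sym2.mk_isDiag_iff] at hd
      exact absurd hd (by simp)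
  edge_finite := by
    have := G.edge_finite
    exact inferInstance

end Multigraph
namespace Multigraph

open scoped Classical

variable {V : Type}

lemma other_ne {G : Multigraph V} {u : V} {e : G.Edge} (h : u ∈ G.ends e) :
    Sym2.Mem.other h ≠ u := by
  intro heq
  have hs := Sym2.other_spec h
  rw [heq] at hs
  have hl := G.loopless e
  rw [← hs, Sym2.mk_isDiag_iff] at hl
  exact hl rfl

/-- Vertex gluing: given vertices `u₁` of `G₁` and `u₂` of `G₂`, both of degree
`k` (witnessed by enumerations `ι₁`, `ι₂` of their incident edges), delete
`u₁` and `u₂` and join, for each `i`, the other endpoint of the `i`-th edge at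
`u₁` to the other endpoint of the `i`-th edge at `u₂`. -/
noncomputable def vertexGlue {V₁ V₂ : Type} (G₁ : Multigraph V₁) (G₂ : Multigraph V₂)
    (u₁ : V₁) (u₂ : V₂) {k : ℕ}
    (ι₁ : Fin k ≃ {e : G₁.Edge // u₁ ∈ G₁.ends e})
    (ι₂ : Fin k ≃ {e : G₂.Edge // u₂ ∈ G₂.ends e}) :
    Multigraph ({x : V₁ // x ≠ u₁} ⊕ {y : V₂ // y ≠ u₂}) where
  Edge := {e : G₁.Edge // u₁ ∉ G₁.ends e} ⊕ {e : G₂.Edge // u₂ ∉ G₂.ends e} ⊕ Fin k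
  ends e :=
    match e with
    | .inl e =>
        (sym2RestrictP (· ≠ u₁) (G₁.ends e.1) fun x hx hxe => e.2 (hxe ▸ hx)).map Sum.inl
    | .inr (.inl e) =>
        (sym2RestrictP (· ≠ u₂) (G₂.ends e.1) fun y hy hye => e.2 (hye ▸ hy)).map Sum.inr
    | .inr (.inr i) =>
        s(Sum.inl ⟨Sym2.Mem.other (ι₁ i).2, other_ne (ι₁ i).2⟩,
          Sum.inr ⟨Sym2.Mem.other (ι₂ i).2, other_ne (ι₂ i).2⟩)
  loopless := by
    rintro (e | e | i) hd
    · exact map_not_isDiag _ _ (fun x _ y _ h => Sum.inl_injective h)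
        (sym2RestrictP_not_isDiag _ _ _ (G₁.loopless e.1)) hd
    · exact map_not_isDiag _ _ (fun x _ y _ h => Sum.inr_injective h)
        (sym2RestrictP_not_isDiag _ _ _ (G₂.loopless e.1)) hd
    · rw [Sym2.mk_isDiag_iff] at hd
      exact absurd hd (by simp)
  edge_finite := by
    have := G₁.edge_finite; have := G₂.edge_finite
    exact inferInstance

/-- Cycle expansion: replace the vertex `u`, of degree `d` with incident edges
enumerated by `ι`, by a cycle on `d'` new vertices `u_0, …, u_{d'-1}`
(`2 ≤ d' ≤ d`); the `i`-th former edge at `u` is attached to `u_i` for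
`i < d' - 1` and to `u_{d'-1}` for `i ≥ d' - 1`, so each of `u_0, …, u_{d'-2}`
receives exactly one of them and `u_{d'-1}` receives the rest. -/
noncomputable def cycleExpand (G : Multigraph V) (u : V) {d d' : ℕ}
    (h2 : 2 ≤ d') (hdd : d' ≤ d)
    (ι : Fin d ≃ {e : G.Edge // u ∈ G.ends e}) :
    Multigraph ({x : V // x ≠ u} ⊕ Fin d') where
  Edge := {e : G.Edge // u ∉ G.ends e} ⊕ (Fin d ⊕ Fin d')
  ends e :=
    match e with
    | .inl e =>
        (sym2RestrictP (· ≠ u) (G.ends e.1) fun x hx hxe => e.2 (hxe ▸ hx)).map Sum.inl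
    | .inr (.inl i) =>
        s(Sum.inr ⟨min i.1 (d' - 1), by omega⟩,
          Sum.inl ⟨Sym2.Mem.other (ι i).2, other_ne (ι i).2⟩)
    | .inr (.inr j) =>
        s(Sum.inr j, Sum.inr ⟨(j.1 + 1) % d', Nat.mod_lt _ (by omega)⟩)
  loopless := by
    rintro (e | i | j) hd
    · exact map_not_isDiag _ _ (fun x _ y _ h => Sum.inl_injective h)
        (sym2RestrictP_not_isDiag _ _ _ (G.loopless e.1)) hd
    · rw [Sym2.mk_isDiag_iff] at hd
      exact absurd hd (by simp)
    · rw [Sym2.mk_isDiag_iff] at hd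
      have hj : j.1 < d' := j.2
      have := congrArg Fin.val (Sum.inr_injective hd)
      simp only at this
      rcases Nat.lt_or_ge (j.1 + 1) d' with h | h
      · rw [Nat.mod_eq_of_lt h] at this; omega
      · have hj1 : j.1 + 1 = d' := by omega
        rw [hj1, Nat.mod_self] at this; omega
  edge_finite := by
    have := G.edge_finite
    exact inferInstance

end Multigraph
namespace Multigraph

open scoped Classical

variable {V : Type}

/-- The edges of `G` crossing the vertex bipartition `⟨A, Aᶜ⟩`. -/
def cutEdges (G : Multigraph V) (A : Set V) : Set G.Edge :=
  {e | (∃ x ∈ G.ends e, x ∈ A) ∧ ∃ y ∈ G.ends e, y ∉ A}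

/-- The bipartition `⟨A, Aᶜ⟩` is a minimum edge cut of `G`: both sides are
nonempty and no other bipartition has fewer crossing edges. -/
def IsMinCut (G : Multigraph V) (A : Set V) : Prop :=
  A.Nonempty ∧ Aᶜ.Nonempty ∧
    ∀ B : Set V, B.Nonempty → Bᶜ.Nonempty →
      (G.cutEdges A).ncard ≤ (G.cutEdges B).ncard

/-- One side of a vertex splitting: keep the side `A` of the cut `⟨A, Aᶜ⟩`,
delete the other side, and reattach each cut edge to a single new vertex
(`none`). -/
noncomputable def splitSide (G : Multigraph V) (A : Set V) :
    Multigraph (Option {x : V // x ∈ A}) where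
  Edge := {e : G.Edge // ∀ x ∈ G.ends e, x ∈ A} ⊕ {e : G.Edge // e ∈ G.cutEdges A}
  ends e :=
    match e with
    | .inl e => (sym2RestrictP (· ∈ A) (G.ends e.1) e.2).map some
    | .inr e =>
        s(none, some ⟨Classical.choose e.2.1, (Classical.choose_spec e.2.1).2⟩)
  loopless := by
    rintro (e | e) hd
    · exact map_not_isDiag _ _ (fun x _ y _ h => Option.some_injective _ h)
        (sym2RestrictP_not_isDiag _ _ _ (G.loopless e.1)) hd
    · rw [Sym2.mk_isDiag_iff] at hd
      exact absurd hd (by simp)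
  edge_finite := by
    have := G.edge_finite
    exact inferInstance

/-- The dumbbell graph: two vertices joined by three parallel edges. -/
def dumbbell : Multigraph (Fin 2) where
  Edge := Fin 3
  ends _ := s(0, 1)
  loopless := fun _ h => absurd (Sym2.mk_isDiag_iff.mp h) (by decide)
  edge_finite := inferInstance

/-- `B` is (the vertex set of) a block of `G`: a maximal set of vertices
inducing a connected, 2-vertex-connected subgraph. -/
def IsBlock (G : Multigraph V) (B : Set V) : Prop :=
  (G.induce B).Biconnected ∧
    ∀ B' : Set V, B ⊆ B' → (G.induce B').Biconnected → B' = B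

/-- The set of double edges of `G`, as unordered pairs of distinct parallel
edges. -/
def doubleEdges (G : Multigraph V) : Set (Sym2 G.Edge) :=
  {z | ∃ e f : G.Edge, z = s(e, f) ∧ e ≠ f ∧ G.ends e = G.ends f}

/-- A collapsible cycle: a chordless, non-articulation cycle, all but at most
one of whose vertices have degree 3, whose contraction to a single vertex
yields an exactly 3-edge-connected multigraph. -/
def IsCollapsible {G : Multigraph V} {v : V} (p : G.Walk v v) : Prop :=
  IsCycle p ∧ IsChordless p ∧
    (G.componentsAvoiding {x | x ∈ p.support}).Subsingleton ∧
    {x : V | x ∈ p.support ∧ G.degree x ≠ 3}.Subsingleton ∧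
    (G.contractSet {x | x ∈ p.support}).ExactlyEdgeConnected 3

end Multigraph
namespace Multigraph

open scoped Classical

variable {V : Type}

/-- Smooth out the degree-two vertex `x` (whose two incident edges are
`e₁ = (x, a)` and `e₂ = (x, b)`): delete `x`, `e₁` and `e₂` and add a single
new edge joining `a` and `b`. -/
noncomputable def smoothAt {S : Set V} (H : Multigraph ↥S) (x a b : ↥S)
    (e₁ e₂ : H.Edge) (hne : e₁ ≠ e₂)
    (h₁ : H.ends e₁ = s(x, a)) (h₂ : H.ends e₂ = s(x, b))
    (hax : a ≠ x) (hbx : b ≠ x) (hab : a ≠ b)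
    (hdeg : ∀ e : H.Edge, x ∈ H.ends e → e = e₁ ∨ e = e₂) :
    Multigraph ↥(S \ {(x : V)}) where
  Edge := {e : H.Edge // e ≠ e₁ ∧ e ≠ e₂} ⊕ Unit
  ends e :=
    match e with
    | .inl e =>
        (sym2RestrictP (fun y : ↥S => y ≠ x) (H.ends e.1)
            (fun y hy hyx => by
              subst hyx
              rcases hdeg e.1 hy with h | h
              exacts [e.2.1 h, e.2.2 h])).map
          fun y => ⟨y.1.1, y.1.2, fun hh => y.2 (Subtype.ext hh)⟩
    | .inr _ =>
        s(⟨a.1, a.2, fun hh => hax (Subtype.ext hh)⟩,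
          ⟨b.1, b.2, fun hh => hbx (Subtype.ext hh)⟩)
  loopless := by
    rintro (e | e) hd
    · refine map_not_isDiag _ _ (fun y _ z _ h => ?_)
        (sym2RestrictP_not_isDiag _ _ _ (H.loopless e.1)) hd
      have hv := Subtype.ext_iff.mp h
      exact Subtype.ext (Subtype.ext hv)
    · rw [Sym2.mk_isDiag_iff] at hd
      have hv := Subtype.ext_iff.mp hd
      exact hab (Subtype.ext hv)
  edge_finite := by
    have := H.edge_finite
    exact inferInstance

/-- `SmoothSeq H K` : the multigraph `K` is obtained from `H` by a finite
sequence of smoothings of degree-two vertices. -/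
inductive SmoothSeq {V : Type} : ∀ {S T : Set V}, Multigraph ↥S → Multigraph ↥T → Prop
  | refl {S : Set V} (H : Multigraph ↥S) : SmoothSeq H H
  | step {S T : Set V} {H : Multigraph ↥S} {K : Multigraph ↥T}
      (x a b : ↥S) (e₁ e₂ : H.Edge) (hne : e₁ ≠ e₂)
      (h₁ : H.ends e₁ = s(x, a)) (h₂ : H.ends e₂ = s(x, b))
      (hax : a ≠ x) (hbx : b ≠ x) (hab : a ≠ b)
      (hdeg : ∀ e : H.Edge, x ∈ H.ends e → e = e₁ ∨ e = e₂) :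
      SmoothSeq (smoothAt H x a b e₁ e₂ hne h₁ h₂ hax hbx hab hdeg) K → SmoothSeq H K

/-- `G` is a 3-thick tree: it is obtained from a tree by replacing every tree
edge by three parallel edges. -/
def IsThreeThickTree (G : Multigraph V) : Prop :=
  ∃ T : SimpleGraph V, T.IsTree ∧
    ∃ f : G.Edge ≃ T.edgeSet × Fin 3, ∀ e : G.Edge, G.ends e = ((f e).1 : Sym2 V)

/-- The graphs obtainable from dumbbell graphs by cycle expansions and block
gluings (up to isomorphism). -/
inductive Synth3 : ∀ {V : Type}, Multigraph V → Prop
  | dumbbell : Synth3 dumbbell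
  | glue {V₁ V₂ : Type} {G₁ : Multigraph V₁} {G₂ : Multigraph V₂} (u₁ : V₁) (u₂ : V₂) :
      Synth3 G₁ → Synth3 G₂ → Synth3 (blockGlue G₁ G₂ u₁ u₂)
  | expand {V : Type} {G : Multigraph V} (u : V) {d d' : ℕ} (h2 : 2 ≤ d') (hdd : d' ≤ d)
      (ι : Fin d ≃ {e : G.Edge // u ∈ G.ends e}) :
      Synth3 G → Synth3 (G.cycleExpand u h2 hdd ι)
  | iso {V W : Type} {G : Multigraph V} {H : Multigraph W} :
      Synth3 G → Iso G H → Synth3 H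

/-- The graphs obtainable from 3-thick trees by block-respecting cycle
expansions (cycle expansions whose new cycle lies inside a single block of the
resulting graph), up to isomorphism. -/
inductive BRSynth : ∀ {V : Type}, Multigraph V → Prop
  | base {V : Type} {G : Multigraph V} : IsThreeThickTree G → BRSynth G
  | expand {V : Type} {G : Multigraph V} (u : V) {d d' : ℕ} (h2 : 2 ≤ d') (hdd : d' ≤ d)
      (ι : Fin d ≃ {e : G.Edge // u ∈ G.ends e})
      (hblock : ∃ B : Set ({x : V // x ≠ u} ⊕ Fin d'),
        (G.cycleExpand u h2 hdd ι).IsBlock B ∧ ∀ j : Fin d', Sum.inr j ∈ B) :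
      BRSynth G → BRSynth (G.cycleExpand u h2 hdd ι)
  | iso {V W : Type} {G : Multigraph V} {H : Multigraph W} :
      BRSynth G → Iso G H → BRSynth H

end Multigraph
namespace Multigraph

/-!
Grow a subgraph `(A, B)` of `G`, starting from a single vertex, in which any two vertices of `A`
are joined by two edge-disjoint trails with edges in `B`. While `A ≠ V`, take an edge `ab`
leaving `A` and a walk from `b` back to `A` avoiding `ab`. Since `G` has no three edge-disjoint
paths between any two vertices, this walk must first return to `A` at `a` itself, so it closes a
cycle meeting `A` only in `a`, and adding it preserves the invariant. Once `A = V`, every edge lies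
in `B`, since any other edge would be a third edge-disjoint path between its endpoints.
-/

variable {V : Type} {G : Multigraph V}

lemma _root_.Relation.ReflTransGen.exists_seq {α : Type*} {r : α → α → Prop} {a b : α}
    (h : Relation.ReflTransGen r a b) :
    ∃ (l : ℕ) (f : ℕ → α), f 0 = a ∧ f l = b ∧ ∀ i < l, r (f i) (f (i + 1)) := by
  induction h with
  | refl => exact ⟨0, fun _ => a, rfl, rfl, fun i hi => absurd hi (Nat.not_lt_zero i)⟩
  | @tail c d _ hcd ih =>
    obtain ⟨l, f, hf0, hfl, hf⟩ := ih
    refine ⟨l + 1, Function.update f (l + 1) d, ?_, by simp, fun i hi => ?_⟩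
    · rwa [Function.update_of_ne (Nat.succ_ne_zero l).symm]
    · rw [Function.update_of_ne (by omega)]
      rcases Nat.lt_succ_iff_lt_or_eq.mp hi with hi | rfl
      · rw [Function.update_of_ne (by omega)]
        exact hf i hi
      · rw [Function.update_self, hfl]
        exact hcd

lemma ne_of_ends_eq {e : G.Edge} {a b : V} (he : G.ends e = s(a, b)) : a ≠ b := by
  have h := G.loopless e
  rwa [he, Sym2.mk_isDiag_iff] at h

lemma exists_mem_ends_ne (e : G.Edge) (c : V) : ∃ x ∈ G.ends e, x ≠ c := by
  obtain ⟨a, b, he⟩ := exists_pair_eq (G.ends e)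
  rw [he]
  by_cases hac : a = c
  · exact ⟨b, Sym2.mem_mk_right a b, fun hbc => ne_of_ends_eq he (hac.trans hbc.symm)⟩
  · exact ⟨a, Sym2.mem_mk_left a b, hac⟩

namespace Walk

def append : ∀ {u v w : V}, G.Walk u v → G.Walk v w → G.Walk u w
  | _, _, _, nil _, q => q
  | _, _, _, cons e he p, q => cons e he (append p q)

def reverse : ∀ {u v : V}, G.Walk u v → G.Walk v u
  | _, _, nil u => nil u
  | _, _, cons e he p => p.reverse.append (cons e (by rw [he, Sym2.eq_swap]) (nil _))

@[simp] lemma edges_append : ∀ {u v w : V} (p : G.Walk u v) (q : G.Walk v w),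
    (p.append q).edges = p.edges ++ q.edges
  | _, _, _, nil _, _ => rfl
  | _, _, _, cons _ _ p, q => by simp [append, edges, edges_append p q]

@[simp] lemma edges_reverse : ∀ {u v : V} (p : G.Walk u v), p.reverse.edges = p.edges.reverse
  | _, _, nil _ => rfl
  | _, _, cons _ _ p => by simp [reverse, edges, edges_reverse p]

lemma support_eq_cons {u v : V} (p : G.Walk u v) : p.support = u :: p.support.tail := by
  cases p <;> rfl

@[simp] lemma start_mem_support {u v : V} (p : G.Walk u v) : u ∈ p.support := by
  rw [support_eq_cons]
  exact List.mem_cons_self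

@[simp] lemma end_mem_support : ∀ {u v : V} (p : G.Walk u v), v ∈ p.support
  | _, _, nil _ => List.mem_singleton_self _
  | _, _, cons _ _ p => List.mem_cons_of_mem _ (end_mem_support p)

lemma support_append : ∀ {u v w : V} (p : G.Walk u v) (q : G.Walk v w),
    (p.append q).support = p.support ++ q.support.tail
  | _, _, _, nil _, q => support_eq_cons q
  | _, _, _, cons _ _ p, q => by simp [append, support, support_append p q]

lemma mem_support_append_iff {u v w x : V} (p : G.Walk u v) (q : G.Walk v w) :
    x ∈ (p.append q).support ↔ x ∈ p.support ∨ x ∈ q.support := by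
  rw [support_append, List.mem_append, support_eq_cons q, List.mem_cons]
  constructor
  · rintro (h | h)
    exacts [Or.inl h, Or.inr (Or.inr h)]
  · rintro (h | rfl | h)
    exacts [Or.inl h, Or.inl p.end_mem_support, Or.inr h]

lemma mem_support_of_mem_edges : ∀ {u v : V} (p : G.Walk u v) {f : G.Edge} {x : V},
    f ∈ p.edges → x ∈ G.ends f → x ∈ p.support
  | _, _, nil _, _, _, hf, _ => absurd hf List.not_mem_nil
  | _, _, cons e he p, f, x, hf, hx => by
    rcases List.mem_cons.mp hf with rfl | hf
    · rw [he, Sym2.mem_iff] at hx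
      rcases hx with rfl | rfl
      exacts [List.mem_cons_self, List.mem_cons_of_mem _ p.start_mem_support]
    · exact List.mem_cons_of_mem _ (mem_support_of_mem_edges p hf hx)

lemma edges_nodup_of_support_nodup : ∀ {u v : V} (p : G.Walk u v),
    p.support.Nodup → p.edges.Nodup
  | _, _, nil _, _ => List.nodup_nil
  | _, _, cons _ he p, h => by
    rw [support, List.nodup_cons] at h
    refine List.nodup_cons.mpr ⟨fun hmem => h.1 ?_, edges_nodup_of_support_nodup p h.2⟩
    exact p.mem_support_of_mem_edges hmem (by rw [he]; exact Sym2.mem_mk_left _ _)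

lemma exists_eq_append_of_mem_support : ∀ {u v x : V} (p : G.Walk u v), x ∈ p.support →
    ∃ (q : G.Walk u x) (r : G.Walk x v), p = q.append r
  | _, _, _, nil _, hx => by
    obtain rfl := List.mem_singleton.mp hx
    exact ⟨nil _, nil _, rfl⟩
  | _, _, x, cons e he p, hx => by
    rcases List.mem_cons.mp hx with rfl | hx
    · exact ⟨nil _, cons e he p, rfl⟩
    · obtain ⟨q, r, rfl⟩ := exists_eq_append_of_mem_support p hx
      exact ⟨cons e he q, r, rfl⟩

lemma exists_bypass : ∀ {u v : V} (p : G.Walk u v),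
    ∃ q : G.Walk u v, q.support.Nodup ∧ q.support ⊆ p.support ∧ q.edges ⊆ p.edges
  | _, _, nil u => ⟨nil u, List.nodup_singleton u, List.Subset.refl _, List.Subset.refl _⟩
  | u, _, cons e he p => by
    obtain ⟨q, hq, hqp, hqe⟩ := exists_bypass p
    by_cases hu : u ∈ q.support
    · obtain ⟨q₁, q₂, rfl⟩ := exists_eq_append_of_mem_support q hu
      rw [support_append, List.nodup_append] at hq
      refine ⟨q₂, ?_, fun x hx => ?_, fun f hf => ?_⟩
      · rw [support_eq_cons, List.nodup_cons]
        exact ⟨fun h => hq.2.2 u q₁.end_mem_support u h rfl, hq.2.1⟩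
      · exact List.mem_cons_of_mem _ (hqp ((mem_support_append_iff q₁ q₂).mpr (Or.inr hx)))
      · exact List.mem_cons_of_mem _ (hqe (by rw [edges_append]; exact List.mem_append_right _ hf))
    · exact ⟨cons e he q, List.nodup_cons.mpr ⟨hu, hq⟩, List.cons_subset_cons _ hqp,
        List.cons_subset_cons _ hqe⟩

lemma exists_prefix_to_set (S : Set V) : ∀ {u v : V} (p : G.Walk u v), v ∈ S →
    ∃ c ∈ S, ∃ q : G.Walk u c, q.edges ⊆ p.edges ∧ ∀ x ∈ q.support, x ∈ S → x = c
  | _, _, nil v, hv => ⟨v, hv, nil v, List.Subset.refl _, fun _ hx _ => List.mem_singleton.mp hx⟩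
  | u, _, cons e he p, hv => by
    by_cases hu : u ∈ S
    · exact ⟨u, hu, nil u, List.nil_subset _, fun _ hx _ => List.mem_singleton.mp hx⟩
    · obtain ⟨c, hc, q, hqp, hqS⟩ := exists_prefix_to_set S p hv
      refine ⟨c, hc, cons e he q, List.cons_subset_cons _ hqp, fun x hx hxS => ?_⟩
      rcases List.mem_cons.mp hx with rfl | hx
      exacts [absurd hxS hu, hqS x hx hxS]

lemma exists_crossing_edge (A : Set V) : ∀ {u v : V}, G.Walk u v → u ∈ A → v ∉ A →
    ∃ (e : G.Edge) (a b : V), G.ends e = s(a, b) ∧ a ∈ A ∧ b ∉ A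
  | _, _, nil _, hu, hv => absurd hu hv
  | u, _, cons (v := m) e he p, hu, hv => by
    by_cases hm : m ∈ A
    · exact exists_crossing_edge A p hm hv
    · exact ⟨e, u, m, he, hu, hm⟩

end Walk

lemma isCycle_cons {a b : V} {e : G.Edge} (he : G.ends e = s(a, b)) (P : G.Walk b a)
    (hP : P.support.Nodup) (heP : e ∉ P.edges) : IsCycle (Walk.cons e he P) := by
  refine ⟨List.nodup_cons.mpr ⟨heP, P.edges_nodup_of_support_nodup hP⟩, hP, ?_⟩
  cases P with
  | nil => exact absurd rfl (ne_of_ends_eq he)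
  | cons => simp [Walk.edges]

lemma hasEDP_of_nodup_flatten {u v : V} {k : ℕ} (P : Fin k → G.Walk u v)
    (h : (List.ofFn fun i => (P i).edges).flatten.Nodup) : G.HasEDP u v k := by
  rw [List.nodup_flatten, List.pairwise_ofFn] at h
  refine ⟨P, fun i => h.1 _ (List.mem_ofFn.mpr ⟨i, rfl⟩), fun i j hij e hi hj => ?_⟩
  rcases lt_or_gt_of_ne hij with hlt | hlt
  exacts [h.2 hlt hi hj, h.2 hlt hj hi]

lemma HasEDP.exists_walk_notMem {u v : V} (h : G.HasEDP u v 2) (e : G.Edge) :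
    ∃ p : G.Walk u v, e ∉ p.edges := by
  obtain ⟨P, -, hP⟩ := h
  by_cases h0 : e ∈ (P 0).edges
  · exact ⟨P 1, hP 0 1 (by decide) e h0⟩
  · exact ⟨P 0, h0⟩

def TwoTrails (G : Multigraph V) (B : Set G.Edge) (x y : V) : Prop :=
  ∃ t₁ t₂ : G.Walk x y, (t₁.edges ++ t₂.edges).Nodup ∧ ∀ f ∈ t₁.edges ++ t₂.edges, f ∈ B

namespace TwoTrails

variable {B B' : Set G.Edge} {x y z : V}

lemma refl (B : Set G.Edge) (x : V) : G.TwoTrails B x x :=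
  ⟨.nil x, .nil x, List.nodup_nil, fun _ hf => absurd hf List.not_mem_nil⟩

lemma mono (h : G.TwoTrails B x y) (hB : B ⊆ B') : G.TwoTrails B' x y :=
  let ⟨t₁, t₂, hnd, ht⟩ := h
  ⟨t₁, t₂, hnd, fun f hf => hB (ht f hf)⟩

lemma trans (h₁ : G.TwoTrails B x y) (h₂ : G.TwoTrails B' y z) (hB : Disjoint B B') :
    G.TwoTrails (B ∪ B') x z := by
  obtain ⟨s₁, s₂, hs, hsB⟩ := h₁
  obtain ⟨o₁, o₂, ho, hoB'⟩ := h₂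
  have hperm : List.Perm ((s₁.append o₁).edges ++ (s₂.append o₂).edges)
      ((s₁.edges ++ s₂.edges) ++ (o₁.edges ++ o₂.edges)) := by
    simpa only [Walk.edges_append, List.append_assoc] using
      (List.perm_append_comm_assoc o₁.edges s₂.edges o₂.edges).append_left s₁.edges
  refine ⟨s₁.append o₁, s₂.append o₂, hperm.nodup_iff.mpr ?_, fun f hf => ?_⟩
  · exact List.nodup_append.mpr ⟨hs, ho, fun f hf g hg hfg =>
      Set.disjoint_left.mp hB (hsB f hf) (hfg ▸ hoB' g hg)⟩
  · rcases List.mem_append.mp (hperm.mem_iff.mp hf) with hf | hf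
    exacts [Or.inl (hsB f hf), Or.inr (hoB' f hf)]

lemma hasEDP_three (h : G.TwoTrails B x y) (t : G.Walk x y) (ht : t.edges.Nodup)
    (htB : ∀ f ∈ t.edges, f ∉ B) : G.HasEDP x y 3 := by
  obtain ⟨t₁, t₂, hnd, hB⟩ := h
  refine hasEDP_of_nodup_flatten ![t₁, t₂, t] ?_
  simp only [List.ofFn_succ, List.ofFn_zero]
  simpa [List.nodup_append] using
    List.nodup_append.mpr ⟨hnd, ht, fun f hf g hg hfg => htB g hg (hfg ▸ hB f hf)⟩

end TwoTrails

lemma twoTrails_of_mem_support {v x y : V} (c : G.Walk v v) (hc : c.edges.Nodup)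
    (hx : x ∈ c.support) (hy : y ∈ c.support) : G.TwoTrails {f | f ∈ c.edges} x y := by
  obtain ⟨q, r, rfl⟩ := c.exists_eq_append_of_mem_support hx
  -- rotate the closed walk so that it starts at `x`, then split it at `y`
  have hy' : y ∈ (r.append q).support := by
    rw [Walk.mem_support_append_iff] at hy ⊢
    exact hy.symm
  obtain ⟨s, t, hst⟩ := (r.append q).exists_eq_append_of_mem_support hy'
  have hperm : List.Perm (s.edges ++ t.reverse.edges) (q.append r).edges := by
    have h := congrArg Walk.edges hst
    simp only [Walk.edges_append] at h
    rw [Walk.edges_append, Walk.edges_reverse]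
    exact ((List.reverse_perm _).append_left _).trans (h ▸ List.perm_append_comm)
  exact ⟨s, t.reverse, hperm.nodup_iff.mpr hc, fun f hf => hperm.mem_iff.mp hf⟩

structure IsTwoEdgeConnectedSubgraph (G : Multigraph V) (A : Set V) (B : Set G.Edge) : Prop where
  nonempty : A.Nonempty
  ends_mem : ∀ f ∈ B, ∀ x ∈ G.ends f, x ∈ A
  twoTrails : ∀ x ∈ A, ∀ y ∈ A, G.TwoTrails B x y

lemma isTwoEdgeConnectedSubgraph_singleton (u : V) :
    G.IsTwoEdgeConnectedSubgraph {u} ∅ := by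
  refine ⟨Set.singleton_nonempty u, fun _ hf => absurd hf (Set.notMem_empty _), ?_⟩
  rintro x hx y hy
  rw [Set.eq_of_mem_singleton hx, Set.eq_of_mem_singleton hy]
  exact TwoTrails.refl ∅ u

namespace IsTwoEdgeConnectedSubgraph

variable {A : Set V} {B : Set G.Edge}

lemma notMem_of_mem_edges (h : G.IsTwoEdgeConnectedSubgraph A B) {u v c : V}
    (p : G.Walk u v) (hp : ∀ x ∈ p.support, x ≠ c → x ∉ A) {f : G.Edge} (hf : f ∈ p.edges) :
    f ∉ B := fun hfB =>
  let ⟨x, hx, hxc⟩ := exists_mem_ends_ne f c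
  hp x (p.mem_support_of_mem_edges hf hx) hxc (h.ends_mem f hfB x hx)

/-- An edge outside `B` joining two vertices of `A` would be a third edge-disjoint path. -/
lemma edges_eq_univ_of_eq_univ (hG : G.ExactlyEdgeConnected 2)
    (h : G.IsTwoEdgeConnectedSubgraph A B) (hA : A = Set.univ) : B = Set.univ := by
  refine Set.eq_univ_of_forall fun f => by_contra fun hf => ?_
  obtain ⟨x, y, hxy⟩ := exists_pair_eq (G.ends f)
  refine (hG.2 x y (ne_of_ends_eq hxy)).2 ?_
  refine (h.twoTrails x (hA ▸ trivial) y (hA ▸ trivial)).hasEDP_three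
    (.cons f hxy (.nil y)) (List.nodup_singleton f) fun g hg => ?_
  rwa [List.mem_singleton.mp hg]

/-- The ear argument: follow an edge `ab` leaving `A` and then a walk back from `b` to `A`
avoiding `ab`; it must return to `a`, since otherwise, together with the two trails inside
`B`, it would give three edge-disjoint paths. -/
lemma exists_cycle (hG : G.ExactlyEdgeConnected 2) (h : G.IsTwoEdgeConnectedSubgraph A B)
    (hA : A ≠ Set.univ) :
    ∃ (a : V) (q : G.Walk a a), IsCycle q ∧ a ∈ A ∧ ∀ x ∈ q.support, x ≠ a → x ∉ A := by
  obtain ⟨v₀, hv₀⟩ := h.nonempty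
  obtain ⟨x₀, hx₀⟩ := (Set.ne_univ_iff_exists_notMem A).mp hA
  obtain ⟨W, -⟩ := (hG.2 v₀ x₀ (ne_of_mem_of_not_mem hv₀ hx₀)).1
  obtain ⟨e, a, b, he, ha, hb⟩ := (W 0).exists_crossing_edge A hv₀ hx₀
  obtain ⟨t, het⟩ := (hG.2 a b (ne_of_ends_eq he)).1.exists_walk_notMem e
  obtain ⟨c, hc, q, hqt, hqA⟩ := t.reverse.exists_prefix_to_set A ha
  obtain ⟨P, hP, hPq, hPe⟩ := q.exists_bypass
  have hPA : ∀ x ∈ P.support, x ≠ c → x ∉ A := fun x hx hxc hxA => hxc (hqA x (hPq hx) hxA)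
  have heP : e ∉ P.edges := fun heP => het (by simpa using hqt (hPe heP))
  have hePB : ∀ f ∈ (Walk.cons e he P).edges, f ∉ B := by
    intro f hf
    rcases List.mem_cons.mp hf with rfl | hf
    · exact fun hfB => hb (h.ends_mem f hfB b (by rw [he]; exact Sym2.mem_mk_right a b))
    · exact h.notMem_of_mem_edges P hPA hf
  obtain rfl : c = a := by
    by_contra hca
    refine (hG.2 a c (Ne.symm hca)).2 ((h.twoTrails a ha c hc).hasEDP_three _ ?_ hePB)
    exact List.nodup_cons.mpr ⟨heP, P.edges_nodup_of_support_nodup hP⟩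
  refine ⟨c, .cons e he P, isCycle_cons he P hP heP, hc, fun x hx hxc => ?_⟩
  exact hPA x ((List.mem_cons.mp hx).resolve_left hxc) hxc

lemma disjoint_edges (h : G.IsTwoEdgeConnectedSubgraph A B) {a : V} (q : G.Walk a a)
    (hqA : ∀ x ∈ q.support, x ≠ a → x ∉ A) : Disjoint B {f | f ∈ q.edges} :=
  Set.disjoint_right.mpr fun _ hf => h.notMem_of_mem_edges q hqA hf

lemma union_cycle (h : G.IsTwoEdgeConnectedSubgraph A B) {a : V} (q : G.Walk a a)
    (hq : q.edges.Nodup) (ha : a ∈ A) (hqA : ∀ x ∈ q.support, x ≠ a → x ∉ A) :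
    G.IsTwoEdgeConnectedSubgraph (A ∪ {x | x ∈ q.support}) (B ∪ {f | f ∈ q.edges}) := by
  have hdisj := h.disjoint_edges q hqA
  have hq' : ∀ x ∈ q.support, ∀ y ∈ q.support, G.TwoTrails {f | f ∈ q.edges} x y :=
    fun x hx y hy => twoTrails_of_mem_support q hq hx hy
  refine ⟨h.nonempty.mono Set.subset_union_left, fun f hf x hx => ?_, ?_⟩
  · rcases hf with hf | hf
    exacts [Or.inl (h.ends_mem f hf x hx), Or.inr (q.mem_support_of_mem_edges hf hx)]
  -- vertices on different sides are joined through `a`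
  rintro x (hx | hx) y (hy | hy)
  · exact (h.twoTrails x hx y hy).mono Set.subset_union_left
  · exact (h.twoTrails x hx a ha).trans (hq' a q.start_mem_support y hy) hdisj
  · exact Set.union_comm _ _ ▸
      (hq' x hx a q.start_mem_support).trans (h.twoTrails a ha y hy) hdisj.symm
  · exact (hq' x hx y hy).mono Set.subset_union_right

end IsTwoEdgeConnectedSubgraph

def CycleAddition (G : Multigraph V) (H H' : Set V × Set G.Edge) : Prop :=
  ∃ (v : V) (q : G.Walk v v), IsCycle q ∧ v ∈ H.1 ∧ (∀ x ∈ q.support, x ≠ v → x ∉ H.1) ∧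
    H'.1 = H.1 ∪ {x | x ∈ q.support} ∧ H'.2 = H.2 ∪ {e | e ∈ q.edges}

/-- Each cycle addition consumes at least one edge outside `B`, so the synthesis terminates. -/
lemma IsTwoEdgeConnectedSubgraph.reflTransGen_cycleAddition_univ (hG : G.ExactlyEdgeConnected 2)
    {A : Set V} {B : Set G.Edge} (h : G.IsTwoEdgeConnectedSubgraph A B) :
    Relation.ReflTransGen G.CycleAddition (A, B) (Set.univ, Set.univ) := by
  induction hn : Bᶜ.ncard using Nat.strong_induction_on generalizing A B with
  | _ n ih =>
    by_cases hA : A = Set.univ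
    · rw [hA, h.edges_eq_univ_of_eq_univ hG hA]
    obtain ⟨a, q, hq, ha, hqA⟩ := h.exists_cycle hG hA
    have hlt : (B ∪ {f | f ∈ q.edges})ᶜ.ncard < n := by
      obtain ⟨f, hf⟩ := List.exists_mem_of_length_pos (lt_of_lt_of_le two_pos hq.2.2)
      refine hn ▸ Set.ncard_lt_ncard ?_ (Set.toFinite _)
      refine Set.compl_subset_compl.mpr Set.subset_union_left |>.ssubset_of_ne fun heq => ?_
      have hfB : f ∈ Bᶜ := Set.disjoint_right.mp (h.disjoint_edges q hqA) hf
      rw [← heq] at hfB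
      exact hfB (Or.inr hf)
    exact .head ⟨a, q, hq, ha, hqA, rfl, rfl⟩
      (ih _ hlt (h.union_cycle q hq.1 ha hqA) rfl)

/-- **Robbins synthesis for exactly 2-edge-connected multigraphs.**
Every exactly 2-edge-connected multigraph `G` is obtained by a Robbins
synthesis: there is a sequence `G_0, …, G_l` of subgraphs of `G` (given by
vertex sets `Hv i` and edge sets `He i`), where `G_0` is a simple cycle,
`G_l = G`, and each `G_{i+1}` is obtained from `G_i` by a cycle addition:
attaching a cycle of new vertices that meets `G_i` in exactly one vertex. -/
theorem robbins_synthesis {V : Type} (G : Multigraph V)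
    (hG : G.ExactlyEdgeConnected 2) :
    ∃ (l : ℕ) (Hv : ℕ → Set V) (He : ℕ → Set G.Edge),
      (∃ (v : V) (p : G.Walk v v), IsCycle p ∧
        Hv 0 = {x | x ∈ p.support} ∧ He 0 = {e | e ∈ p.edges}) ∧
      Hv l = Set.univ ∧ He l = Set.univ ∧
      ∀ i < l, ∃ (v : V) (q : G.Walk v v), IsCycle q ∧
        v ∈ Hv i ∧ (∀ x ∈ q.support, x ≠ v → x ∉ Hv i) ∧
        Hv (i + 1) = Hv i ∪ {x | x ∈ q.support} ∧
        He (i + 1) = He i ∪ {e | e ∈ q.edges} := by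
  obtain ⟨u, w, huw⟩ := hG.1
  -- the first cycle is a cycle addition to the single vertex `u`
  rcases ((isTwoEdgeConnectedSubgraph_singleton u).reflTransGen_cycleAddition_univ hG).cases_head
    with h | ⟨H, ⟨v, p, hp, hv, -, hH₁, hH₂⟩, hH⟩
  · exact (huw (Set.eq_univ_iff_forall.mp (congrArg Prod.fst h) w).symm).elim
  obtain ⟨l, f, hf0, hfl, hf⟩ := hH.exists_seq
  obtain rfl : v = u := hv
  refine ⟨l, fun i => (f i).1, fun i => (f i).2, ⟨v, p, hp, ?_, ?_⟩,
    congrArg Prod.fst hfl, congrArg Prod.snd hfl, hf⟩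
  · simpa only [hf0, hH₁, Set.union_eq_right, Set.singleton_subset_iff] using
      show v ∈ {x | x ∈ p.support} from p.start_mem_support
  · simp only [hf0, hH₂, Set.empty_union]

end Multigraph
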